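/- arXiv:2410.10250 — 3 statements merged into one kernel-verified Lean document; each statement's English description precedes it below -/
import Mathlib

section
/- For \alpha\in(1,2), the proxy density \bar p_\alpha satisfies an approximate convolution property: there exists a constant \mathfrak{c}\ge 1 depending only on d,\alpha such that for all u,v>0 and x,y\in\mathbb{R}^d, \int_{\mathbb{R}^d} \bar p_\alpha(u,z-x)\,\bar p_\alpha(v,y-z)\,dz \le \mathfrak{c}\,\bar p_\alpha(u+v, y-x). -/
/-!
Write `p̄_α(s, z) = C_α / W(s, ‖z‖)` with `W(s, r) = s^(d/α) (1 + r s^(-1/α))^(d+α)`.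
Up to the factors `2^(d+α)` and `2`, `W(s, r)` is `s^(d/α) + r^(d+α) / s`, and this expression is
quasi-subadditive in `(s, r)`. With the triangle inequality this gives
`W(u+v, ‖a+b‖) ≲ W(u, ‖a‖) + W(v, ‖b‖)`, i.e.
`p̄_α(u, a) p̄_α(v, b) ≲ p̄_α(u+v, a+b) (p̄_α(u, a) + p̄_α(v, b))`; integrating over the
intermediate point and using that both densities have mass one bounds the convolution.
-/

open MeasureTheory Real

lemma add_rpow_le_two_rpow_mul {γ a b : ℝ} (hγ : 0 ≤ γ) (ha : 0 ≤ a) (hb : 0 ≤ b) :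
    (a + b) ^ γ ≤ 2 ^ γ * (a ^ γ + b ^ γ) := by
  have hmax : (a + b) ^ γ ≤ 2 ^ γ * max a b ^ γ := by
    rw [← mul_rpow zero_le_two (le_max_of_le_left ha)]
    exact rpow_le_rpow (by positivity) (by linarith [le_max_left a b, le_max_right a b]) hγ
  have : max a b ^ γ ≤ a ^ γ + b ^ γ := by
    rcases max_choice a b with h | h <;> rw [h] <;>
      linarith [rpow_nonneg ha γ, rpow_nonneg hb γ]
  exact hmax.trans (by gcongr)

lemma rpow_add_div_add_le {γ β u v A B : ℝ} (hγ : 0 ≤ γ) (hβ : 0 ≤ β) (hu : 0 < u)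
    (hv : 0 < v) (hA : 0 ≤ A) (hB : 0 ≤ B) :
    (u + v) ^ γ + (A + B) ^ β / (u + v) ≤
      (2 ^ γ + 2 ^ β) * ((u ^ γ + A ^ β / u) + (v ^ γ + B ^ β / v)) := by
  have hA' : A ^ β / (u + v) ≤ A ^ β / u := by gcongr; linarith
  have hB' : B ^ β / (u + v) ≤ B ^ β / v := by gcongr; linarith
  have h1 := add_rpow_le_two_rpow_mul hγ hu.le hv.le
  have h2 : (A + B) ^ β / (u + v) ≤ 2 ^ β * (A ^ β / u + B ^ β / v) := by
    calc (A + B) ^ β / (u + v) ≤ 2 ^ β * (A ^ β + B ^ β) / (u + v) := by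
          gcongr; exact add_rpow_le_two_rpow_mul hβ hA hB
      _ = 2 ^ β * (A ^ β / (u + v) + B ^ β / (u + v)) := by ring
      _ ≤ 2 ^ β * (A ^ β / u + B ^ β / v) := by gcongr
  have : 0 ≤ u ^ γ + v ^ γ := by positivity
  have : 0 ≤ A ^ β / u + B ^ β / v := by positivity
  nlinarith [rpow_pos_of_pos two_pos γ, rpow_pos_of_pos two_pos β]

/-- The `W` of the header: `p̄_α(s, z) = C_α / stableWeight d α s ‖z‖`. -/
noncomputable def stableWeight (d α s r : ℝ) : ℝ :=
  s ^ (d / α) * (1 + r / s ^ (1 / α)) ^ (d + α)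

section StableWeight

variable {d α s r : ℝ}

lemma div_stableWeight_eq (C : ℝ) (hs : 0 < s) (hr : 0 ≤ r) :
    C / stableWeight d α s r = C * s ^ (-d / α) * (1 + r / s ^ (1 / α)) ^ (-(d + α)) := by
  rw [stableWeight, neg_div, rpow_neg hs.le, rpow_neg (by positivity), mul_assoc, ← mul_inv,
    div_eq_mul_inv]

lemma stableWeight_pos (hs : 0 < s) (hr : 0 ≤ r) : 0 < stableWeight d α s r := by
  unfold stableWeight; positivity

lemma stableWeight_mono {r' : ℝ} (hdα : 0 ≤ d + α) (hs : 0 < s) (hr : 0 ≤ r)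
    (hrr' : r ≤ r') :
    stableWeight d α s r ≤ stableWeight d α s r' := by
  unfold stableWeight; gcongr

lemma rpow_mul_div_rpow_rpow (hα : α ≠ 0) (hs : 0 < s) (hr : 0 ≤ r) :
    s ^ (d / α) * (r / s ^ (1 / α)) ^ (d + α) = r ^ (d + α) / s := by
  rw [div_rpow hr (rpow_nonneg hs.le _), ← rpow_mul hs.le, mul_div, mul_comm, mul_div_assoc,
    ← rpow_sub hs, show d / α - 1 / α * (d + α) = -1 by field_simp; ring, rpow_neg_one,
    div_eq_mul_inv]

lemma stableWeight_le (hα : 0 < α) (hd : 0 ≤ d) (hs : 0 < s) (hr : 0 ≤ r) :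
    stableWeight d α s r ≤ 2 ^ (d + α) * (s ^ (d / α) + r ^ (d + α) / s) := by
  have h := add_rpow_le_two_rpow_mul (by linarith : 0 ≤ d + α) zero_le_one
    (by positivity : 0 ≤ r / s ^ (1 / α))
  rw [one_rpow] at h
  calc stableWeight d α s r
      ≤ s ^ (d / α) * (2 ^ (d + α) * (1 + (r / s ^ (1 / α)) ^ (d + α))) := by
        unfold stableWeight; gcongr
    _ = 2 ^ (d + α) * (s ^ (d / α) + r ^ (d + α) / s) := by
        rw [← rpow_mul_div_rpow_rpow hα.ne' hs hr]; ring

lemma le_stableWeight (hα : 0 < α) (hd : 0 ≤ d) (hs : 0 < s) (hr : 0 ≤ r) :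
    s ^ (d / α) + r ^ (d + α) / s ≤ 2 * stableWeight d α s r := by
  have hq : 0 ≤ r / s ^ (1 / α) := by positivity
  have h1 : 1 ≤ (1 + r / s ^ (1 / α)) ^ (d + α) := one_le_rpow (by linarith) (by linarith)
  have h2 : (r / s ^ (1 / α)) ^ (d + α) ≤ (1 + r / s ^ (1 / α)) ^ (d + α) :=
    rpow_le_rpow hq (by linarith) (by linarith)
  rw [← rpow_mul_div_rpow_rpow hα.ne' hs hr]
  unfold stableWeight
  nlinarith [rpow_nonneg hs.le (d / α)]

lemma stableWeight_add_le (hα : 0 < α) (hd : 0 ≤ d) {u v A B : ℝ} (hu : 0 < u) (hv : 0 < v)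
    (hA : 0 ≤ A) (hB : 0 ≤ B) :
    stableWeight d α (u + v) (A + B) ≤
      2 * 2 ^ (d + α) * (2 ^ (d / α) + 2 ^ (d + α)) *
        (stableWeight d α u A + stableWeight d α v B) := by
  calc stableWeight d α (u + v) (A + B)
      ≤ 2 ^ (d + α) * ((u + v) ^ (d / α) + (A + B) ^ (d + α) / (u + v)) :=
        stableWeight_le hα hd (by positivity) (by positivity)
    _ ≤ 2 ^ (d + α) * ((2 ^ (d / α) + 2 ^ (d + α)) *
          ((u ^ (d / α) + A ^ (d + α) / u) + (v ^ (d / α) + B ^ (d + α) / v))) := by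
        gcongr
        exact rpow_add_div_add_le (by positivity) (by positivity) hu hv hA hB
    _ ≤ 2 ^ (d + α) * ((2 ^ (d / α) + 2 ^ (d + α)) *
          (2 * stableWeight d α u A + 2 * stableWeight d α v B)) := by
        gcongr
        · exact le_stableWeight hα hd hu hA
        · exact le_stableWeight hα hd hv hB
    _ = _ := by ring

end StableWeight

lemma div_mul_div_le_mul_div_mul_add {a b c K : ℝ} (C : ℝ) (ha : 0 < a) (hb : 0 < b)
    (hc : 0 < c) (h : c ≤ K * (a + b)) : C / a * (C / b) ≤ K * (C / c) * (C / a + C / b) := by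
  have key : K * (C / c) * (C / a + C / b) - C / a * (C / b) =
      C ^ 2 * ((K * (a + b) - c) / (c * (a * b))) := by
    field_simp
    ring
  have : 0 ≤ C ^ 2 * ((K * (a + b) - c) / (c * (a * b))) := by
    apply mul_nonneg (sq_nonneg C) (div_nonneg (by linarith) (by positivity))
  linarith

lemma div_stableWeight_mul_div_stableWeight_le {E : Type*} [SeminormedAddCommGroup E]
    {d α u v : ℝ} (hα : 0 < α) (hd : 0 ≤ d) (C : ℝ) (hu : 0 < u) (hv : 0 < v) (x y z : E) :
    C / stableWeight d α u ‖z - x‖ * (C / stableWeight d α v ‖y - z‖) ≤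
      2 * 2 ^ (d + α) * (2 ^ (d / α) + 2 ^ (d + α)) *
        (C / stableWeight d α (u + v) ‖y - x‖) *
        (C / stableWeight d α u ‖z - x‖ + C / stableWeight d α v ‖y - z‖) := by
  have huv : 0 < u + v := add_pos hu hv
  refine div_mul_div_le_mul_div_mul_add C (stableWeight_pos hu (norm_nonneg _))
    (stableWeight_pos hv (norm_nonneg _)) (stableWeight_pos huv (norm_nonneg _)) ?_
  calc stableWeight d α (u + v) ‖y - x‖
      ≤ stableWeight d α (u + v) (‖z - x‖ + ‖y - z‖) :=
        stableWeight_mono (by linarith) huv (norm_nonneg _)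
          ((norm_sub_le_norm_sub_add_norm_sub y z x).trans_eq (add_comm _ _))
    _ ≤ _ := stableWeight_add_le hα hd hu hv (norm_nonneg _) (norm_nonneg _)

lemma integral_mul_le_of_le_mul_add {G : Type*} [AddGroup G] [MeasurableSpace G]
    [MeasurableAdd G] [MeasurableNeg G] {μ : Measure G} [μ.IsAddLeftInvariant]
    [μ.IsAddRightInvariant] [μ.IsNegInvariant] {f g : G → ℝ} (hf : ∫ z, f z ∂μ = 1)
    (hg : ∫ z, g z ∂μ = 1) (hf0 : ∀ z, 0 ≤ f z) (hg0 : ∀ z, 0 ≤ g z)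
    {M : ℝ} {x y : G} (h : ∀ z, f (z - x) * g (y - z) ≤ M * (f (z - x) + g (y - z))) :
    ∫ z, f (z - x) * g (y - z) ∂μ ≤ 2 * M := by
  have hfx : Integrable (fun z => f (z - x)) μ :=
    (Integrable.of_integral_ne_zero (by simp [hf])).comp_sub_right x
  have hgy : Integrable (fun z => g (y - z)) μ :=
    (Integrable.of_integral_ne_zero (by simp [hg])).comp_sub_left y
  calc ∫ z, f (z - x) * g (y - z) ∂μ ≤ ∫ z, M * (f (z - x) + g (y - z)) ∂μ :=
        integral_mono_of_nonneg (.of_forall fun z => mul_nonneg (hf0 _) (hg0 _))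
          ((hfx.add hgy).const_mul M) (.of_forall h)
    _ = 2 * M := by
        rw [integral_const_mul, integral_add hfx hgy, integral_sub_right_eq_self f x,
          integral_sub_left_eq_self g μ y, hf, hg]
        ring

theorem stmt2_general (d : ℕ) (α : ℝ) (hα1 : 1 < α)
    (Cα : ℝ) (hCα : 0 < Cα)
    (p : ℝ → EuclideanSpace ℝ (Fin d) → ℝ)
    (hp : ∀ v : ℝ, 0 < v → ∀ z, p v z =
      Cα * v ^ (-(d : ℝ) / α) * (1 + ‖z‖ / v ^ (1 / α)) ^ (-((d : ℝ) + α)))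
    (hnorm : ∀ v : ℝ, 0 < v → (∫ z, p v z) = 1) :
    ∃ 𝔠 : ℝ, 1 ≤ 𝔠 ∧ ∀ u v : ℝ, 0 < u → 0 < v →
      ∀ x y : EuclideanSpace ℝ (Fin d),
        (∫ z, p u (z - x) * p v (y - z)) ≤ 𝔠 * p (u + v) (y - x) := by
  have hα : 0 < α := by linarith
  have hp' : ∀ s, 0 < s → ∀ z, p s z = Cα / stableWeight d α s ‖z‖ := fun s hs z => by
    rw [hp s hs, div_stableWeight_eq Cα hs (norm_nonneg z)]
  have hp0 : ∀ s, 0 < s → ∀ z, 0 ≤ p s z := fun s hs z => by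
    rw [hp' s hs]; exact div_nonneg hCα.le (stableWeight_pos hs (norm_nonneg z)).le
  set K : ℝ := 2 * 2 ^ ((d : ℝ) + α) * (2 ^ ((d : ℝ) / α) + 2 ^ ((d : ℝ) + α))
  have hK : 1 ≤ 2 * K := by
    have := one_le_rpow one_le_two (by linarith : 0 ≤ (d : ℝ) + α)
    have := rpow_pos_of_pos two_pos ((d : ℝ) / α)
    nlinarith
  refine ⟨2 * K, hK, fun u v hu hv x y => ?_⟩
  have huv : 0 < u + v := add_pos hu hv
  calc ∫ z, p u (z - x) * p v (y - z) ≤ 2 * (K * p (u + v) (y - x)) := by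
        refine integral_mul_le_of_le_mul_add (hnorm u hu) (hnorm v hv) (hp0 u hu) (hp0 v hv)
          fun z => ?_
        rw [hp' u hu, hp' v hv, hp' _ huv]
        exact div_stableWeight_mul_div_stableWeight_le hα d.cast_nonneg Cα hu hv x y z
    _ = 2 * K * p (u + v) (y - x) := by ring

/-- Approximate convolution property for the stable proxy density `p̄_α`. -/
theorem stmt2 (d : ℕ) (hd : 1 ≤ d) (α : ℝ) (hα1 : 1 < α) (hα2 : α < 2)
    (Cα : ℝ) (hCα : 0 < Cα)
    (p : ℝ → EuclideanSpace ℝ (Fin d) → ℝ)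
    (hp : ∀ v : ℝ, 0 < v → ∀ z, p v z =
      Cα * v ^ (-(d : ℝ) / α) * (1 + ‖z‖ / v ^ (1 / α)) ^ (-((d : ℝ) + α)))
    (hnorm : ∀ v : ℝ, 0 < v → (∫ z, p v z) = 1) :
    ∃ 𝔠 : ℝ, 1 ≤ 𝔠 ∧ ∀ u v : ℝ, 0 < u → 0 < v →
      ∀ x y : EuclideanSpace ℝ (Fin d),
        (∫ z, p u (z - x) * p v (y - z)) ≤ 𝔠 * p (u + v) (y - x) :=
  stmt2_general d α hα1 Cα hCα p hp hnorm
end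

section
/- Discrete Gr\"onwall–Volterra lemma with weak singularity: let \alpha>1, let f:[0,T]\to[0,\infty) be bounded and measurable, A\ge0, h\in(0,T], and suppose for all t\in[h,T]: f(t) \le A + C\int_h^t f(\tau_s^h)\,(t-\tau_s^h)^{-1/\alpha}\,ds, where \tau_s^h=h\lfloor s/h\rfloor. Then there exists a constant K depending only on C, \alpha, T (not on h or A) such that f(t)\le K A for all t\in[h,T]. -/
/-!
Exponential weighting: measure `f` against `exp (l * t)`. The weighted kernel
`x ^ (-1/α) * exp (-l x)` has total mass `Γ(1 - 1/α) / l ^ (1 - 1/α)` on `(0, ∞)`, so for `l`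
large (depending only on `C` and `α`) the integral term is at most half the weighted bound.
If `f ≤ 2 A exp (l ·)` at all grid points `τ_s^h`, `s < t`, the inequality at `t` then gives
`f t ≤ A + A exp (l t) ≤ 2 A exp (l t)`. The grid points seen from `t` lie strictly before
`t`, so induction on `⌈t / h⌉` yields `f ≤ 2 exp (l T) · A` on `[h, T]`.
-/

open MeasureTheory intervalIntegral Real Set

section Kernel

variable {p l : ℝ}

lemma antitoneOn_rpow_mul_exp_neg_mul (hp : p ≤ 0) (hl : 0 ≤ l) :
    AntitoneOn (fun x : ℝ => x ^ p * exp (-(l * x))) (Ioi 0) := by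
  intro x hx y _ hxy
  have hexp : exp (-(l * y)) ≤ exp (-(l * x)) := exp_le_exp.2 (by nlinarith)
  exact mul_le_mul (rpow_le_rpow_of_nonpos hx hxy hp) hexp (exp_pos _).le
    (rpow_nonneg (le_of_lt hx) _)

lemma integrableOn_rpow_mul_exp_neg_mul (hp : -1 < p) (hl : 0 < l) :
    IntegrableOn (fun x : ℝ => x ^ p * exp (-(l * x))) (Ioi 0) := by
  simpa [neg_mul] using integrableOn_rpow_mul_exp_neg_mul_rpow hp one_pos hl

lemma integral_sub_rpow_mul_exp_neg_mul_le (hp : -1 < p) (hl : 0 < l) {a t : ℝ} (hat : a ≤ t) :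
    ∫ s in a..t, (t - s) ^ p * exp (-(l * (t - s))) ≤ (1 / l) ^ (p + 1) * Gamma (p + 1) := by
  have hGamma := integral_rpow_mul_exp_neg_mul_Ioi (by linarith : 0 < p + 1) hl
  rw [add_sub_cancel_right] at hGamma
  rw [integral_comp_sub_left (fun x => x ^ p * exp (-(l * x))), sub_self,
    integral_of_le (by linarith), ← hGamma]
  refine setIntegral_mono_set (integrableOn_rpow_mul_exp_neg_mul hp hl) ?_
    Ioc_subset_Ioi_self.eventuallyLE
  filter_upwards [ae_restrict_mem measurableSet_Ioi] with x hx
  exact mul_nonneg (rpow_nonneg (le_of_lt hx) _) (exp_pos _).le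

lemma intervalIntegrable_sub_rpow_mul_exp_neg_mul (hp : -1 < p) (hl : 0 < l) {a t : ℝ}
    (hat : a ≤ t) :
    IntervalIntegrable (fun s => (t - s) ^ p * exp (-(l * (t - s)))) volume a t := by
  have hint : IntervalIntegrable (fun x : ℝ => x ^ p * exp (-(l * x))) volume 0 (t - a) :=
    (intervalIntegrable_iff_integrableOn_Ioc_of_le (by linarith)).2
      ((integrableOn_rpow_mul_exp_neg_mul hp hl).mono_set Ioc_subset_Ioi_self)
  simpa using (hint.comp_sub_left t).symm

end Kernel

theorem integral_delay_rpow_kernel_le {p l a t B : ℝ} {f τ : ℝ → ℝ} (hp : -1 < p) (hp0 : p ≤ 0)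
    (hl : 0 < l) (hB : 0 ≤ B) (hat : a ≤ t) (hf0 : ∀ x, 0 ≤ f x)
    (hτ : ∀ s ∈ Ioo a t, τ s ≤ s) (hfτ : ∀ s ∈ Ioo a t, f (τ s) ≤ B * exp (l * τ s)) :
    ∫ s in a..t, f (τ s) * (t - τ s) ^ p ≤
      B * exp (l * t) * ((1 / l) ^ (p + 1) * Gamma (p + 1)) := by
  set kernel : ℝ → ℝ := fun s => (t - s) ^ p * exp (-(l * (t - s)))
  -- Trading `exp (l * τ)` for `exp (l * t)` leaves a kernel that is antitone in `t - τ ≥ t - s`.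
  have hpointwise : ∀ s ∈ Ioo a t, f (τ s) * (t - τ s) ^ p ≤ B * exp (l * t) * kernel s := by
    intro s hs
    have hτs : t - s ≤ t - τ s := by linarith [hτ s hs]
    calc f (τ s) * (t - τ s) ^ p ≤ B * exp (l * τ s) * (t - τ s) ^ p :=
          mul_le_mul_of_nonneg_right (hfτ s hs) (rpow_nonneg (by linarith [hs.2]) _)
      _ = B * exp (l * t) * ((t - τ s) ^ p * exp (-(l * (t - τ s)))) := by
          have hexp : exp (l * τ s) = exp (l * t) * exp (-(l * (t - τ s))) := by
            rw [← exp_add]; ring_nf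
          rw [hexp]; ring
      _ ≤ B * exp (l * t) * kernel s := by
          gcongr
          exact antitoneOn_rpow_mul_exp_neg_mul hp0 hl.le (sub_pos.2 hs.2)
            (mem_Ioi.2 (by linarith [hs.2])) hτs
  have hnonneg : ∀ s ∈ Ioo a t, 0 ≤ f (τ s) * (t - τ s) ^ p := fun s hs =>
    mul_nonneg (hf0 _) (rpow_nonneg (by linarith [hτ s hs, hs.2]) _)
  calc ∫ s in a..t, f (τ s) * (t - τ s) ^ p ≤ ∫ s in a..t, B * exp (l * t) * kernel s := by
        rw [integral_of_le hat, integral_of_le hat, integral_Ioc_eq_integral_Ioo,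
          integral_Ioc_eq_integral_Ioo]
        refine integral_mono_of_nonneg ?_ ?_ ?_
        · exact (ae_restrict_iff' measurableSet_Ioo).2 (.of_forall hnonneg)
        · exact (((intervalIntegrable_sub_rpow_mul_exp_neg_mul hp hl hat).const_mul _).1).mono_set
            Ioo_subset_Ioc_self
        · exact (ae_restrict_iff' measurableSet_Ioo).2 (.of_forall hpointwise)
    _ ≤ B * exp (l * t) * ((1 / l) ^ (p + 1) * Gamma (p + 1)) := by
        rw [intervalIntegral.integral_const_mul]
        exact mul_le_mul_of_nonneg_left (integral_sub_rpow_mul_exp_neg_mul_le hp hl hat)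
          (by positivity)

section Grid

variable {h s : ℝ}

lemma le_mul_floor_div (hh : 0 < h) (hs : h ≤ s) : h ≤ h * (⌊s / h⌋ : ℝ) := by
  have hfloor : (1 : ℝ) ≤ ⌊s / h⌋ := by
    exact_mod_cast Int.le_floor.2 (by rw [Int.cast_one, le_div_iff₀ hh]; linarith)
  nlinarith

lemma mul_floor_div_le (hh : 0 < h) : h * (⌊s / h⌋ : ℝ) ≤ s := by
  have hfloor := Int.floor_le (s / h)
  rw [le_div_iff₀ hh] at hfloor
  linarith

lemma ceil_mul_floor_div_div_lt (hh : 0 < h) (hs : 0 ≤ s) {t : ℝ} (hst : s < t) :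
    ⌈h * (⌊s / h⌋ : ℝ) / h⌉₊ < ⌈t / h⌉₊ := by
  rw [mul_div_cancel_left₀ _ hh.ne', ← natCast_floor_eq_intCast_floor (by positivity),
    Nat.ceil_natCast, Nat.lt_ceil]
  exact (Nat.floor_le (by positivity)).trans_lt (div_lt_div_of_pos_right hst hh)

end Grid

theorem le_two_mul_exp_of_volterra_grid {T C A h p l : ℝ} {f : ℝ → ℝ} (hh : 0 < h)
    (hp : -1 < p) (hp0 : p ≤ 0) (hl : 0 < l) (hC : 0 ≤ C) (hA : 0 ≤ A)
    (hrate : C * ((1 / l) ^ (p + 1) * Gamma (p + 1)) ≤ 1 / 2) (hf0 : ∀ x, 0 ≤ f x)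
    (H : ∀ t ∈ Icc h T,
      f t ≤ A + C * ∫ s in h..t, f (h * (⌊s / h⌋ : ℝ)) * (t - h * (⌊s / h⌋ : ℝ)) ^ p) :
    ∀ t ∈ Icc h T, f t ≤ 2 * A * exp (l * t) := by
  have hstep : ∀ t ∈ Icc h T,
      (∀ s ∈ Ioo h t, f (h * (⌊s / h⌋ : ℝ)) ≤ 2 * A * exp (l * (h * (⌊s / h⌋ : ℝ)))) →
      f t ≤ 2 * A * exp (l * t) := by
    intro t ht hgrid
    have hint := integral_delay_rpow_kernel_le hp hp0 hl (by positivity) ht.1 hf0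
      (fun s _ => mul_floor_div_le hh) hgrid
    have hexp : 1 ≤ exp (l * t) := one_le_exp (by nlinarith [ht.1])
    have hAexp : 0 ≤ A * exp (l * t) := by positivity
    calc f t ≤ A + C * (2 * A * exp (l * t) * ((1 / l) ^ (p + 1) * Gamma (p + 1))) := by
          grw [H t ht, hint]
      _ ≤ A + A * exp (l * t) := by nlinarith
      _ ≤ 2 * A * exp (l * t) := by nlinarith
  -- Every grid point `h * ⌊s / h⌋` with `s < t` has a smaller `⌈· / h⌉₊` than `t`.
  suffices ∀ k : ℕ, ∀ t ∈ Icc h T, ⌈t / h⌉₊ = k → f t ≤ 2 * A * exp (l * t) from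
    fun t ht => this _ t ht rfl
  intro k
  induction k using Nat.strong_induction_on with
  | _ k ih =>
    rintro t ht rfl
    refine hstep t ht fun s hs => ih _ (ceil_mul_floor_div_div_lt hh (by linarith [hs.1]) hs.2)
      _ ⟨le_mul_floor_div hh hs.1.le, ?_⟩ rfl
    linarith [mul_floor_div_le hh (s := s), hs.2, ht.2]

lemma exists_pos_mul_one_div_rpow_eq {a c y : ℝ} (ha : 0 < a) (hc : 0 < c) (hy : 0 < y) :
    ∃ l > 0, c * (1 / l) ^ a = y := by
  refine ⟨(c / y) ^ a⁻¹, by positivity, ?_⟩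
  rw [one_div, inv_rpow (by positivity), rpow_inv_rpow (by positivity) ha.ne']
  field_simp

theorem stmt15_general (T α C : ℝ) (hT : 0 < T) (hα1 : 1 < α) (hC : 0 < C) :
    ∃ K : ℝ, 0 < K ∧ ∀ n : ℕ, 0 < n → ∀ h : ℝ, h = T / n →
      ∀ f : ℝ → ℝ, (∀ t, 0 ≤ f t) → Measurable f →
        (∃ M : ℝ, ∀ t ∈ Set.Icc (0 : ℝ) T, f t ≤ M) →
        ∀ A : ℝ, 0 ≤ A →
          (∀ t ∈ Set.Icc h T,
            f t ≤ A + C * ∫ s in h..t,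
              f (h * (⌊s / h⌋ : ℝ)) * (t - h * (⌊s / h⌋ : ℝ)) ^ (-(1 : ℝ) / α)) →
          ∀ t ∈ Set.Icc h T, f t ≤ K * A := by
  have hp : -1 < -(1 : ℝ) / α := by
    rw [neg_div, neg_lt_neg_iff, div_lt_one (by linarith)]; exact hα1
  have hp0 : -(1 : ℝ) / α ≤ 0 := div_nonpos_of_nonpos_of_nonneg (by norm_num) (by linarith)
  have hp1 : 0 < -(1 : ℝ) / α + 1 := by linarith
  obtain ⟨l, hl, hrate⟩ :=
    exists_pos_mul_one_div_rpow_eq hp1 (mul_pos hC (Gamma_pos_of_pos hp1)) one_half_pos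
  refine ⟨2 * exp (l * T), by positivity, ?_⟩
  rintro n hn h rfl f hf0 - - A hA H t ht
  have hbound := le_two_mul_exp_of_volterra_grid (by positivity) hp hp0 hl hC.le hA
    (le_of_eq (by rw [← hrate]; ring)) hf0 H t ht
  calc f t ≤ 2 * A * exp (l * t) := hbound
    _ ≤ 2 * exp (l * T) * A := by
        rw [mul_right_comm]; gcongr; exact ht.2

/-- Discrete Grönwall–Volterra lemma with a weakly singular kernel. -/
theorem stmt15 (T α C : ℝ) (hT : 0 < T) (hα1 : 1 < α) (hα2 : α ≤ 2) (hC : 0 < C) :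
    ∃ K : ℝ, 0 < K ∧ ∀ n : ℕ, 0 < n → ∀ h : ℝ, h = T / n →
      ∀ f : ℝ → ℝ, (∀ t, 0 ≤ f t) → Measurable f →
        (∃ M : ℝ, ∀ t ∈ Set.Icc (0 : ℝ) T, f t ≤ M) →
        ∀ A : ℝ, 0 ≤ A →
          (∀ t ∈ Set.Icc h T,
            f t ≤ A + C * ∫ s in h..t,
              f (h * (⌊s / h⌋ : ℝ)) * (t - h * (⌊s / h⌋ : ℝ)) ^ (-(1 : ℝ) / α)) →
          ∀ t ∈ Set.Icc h T, f t ≤ K * A :=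
  stmt15_general T α C hT hα1 hC
end

section
/- Smoothing effect of a H\"older drift against the heat kernel gradient (Gaussian case): let \beta\in(0,1), b:\mathbb{R}^d\to\mathbb{R}^d bounded and \beta-H\"older, and let \mu be a probability measure on \mathbb{R}^d with density G satisfying G(z)\le K g_c(\sigma, z-x) and |G(z)-G(y)|\le K(|z-y|/\sigma^{1/2})^\beta (g_c(\sigma,z-x)+g_c(\sigma,y-x)) for all y,z. Then for any u>0 with \sigma \ge u and any \mathfrak{y}\in\mathbb{R}^d, \Big|\int G(z)\,b(z)\cdot\nabla_{\mathfrak y} p_2(u, \mathfrak y - z)\,dz\Big| \le C\, u^{(\beta-1)/2}\,(1+\sigma^{-\beta/2})\, g_{c'}(\sigma+u, \mathfrak y - x), for constants C, c'>c depending only on d, \beta, K, \|b\|_\infty and the H\"older constant of b. (Proof: cancellation G(z)b(z)-G(\mathfrak y)b(\mathfrak y), H\"older bounds, and the moment absorption |\mathfrak y - z|^\beta |\nabla p_2(u,\mathfrak y - z)| \le C u^{(\beta-1)/2} g_c(u,\mathfrak y-z).) -/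
/-!
Since `∫ ∇p₂(u, 𝔶 - z) dz = 0`, the integrand may be replaced by
`(G(z) b(z) - G(𝔶) b(𝔶)) · ∇p₂(u, 𝔶 - z)`. The Hölder bounds on `G` and `b` turn this into a factor
`|𝔶 - z|^β`, which the Gaussian absorbs: `|w|^β |∇p₂(u, w)| ≲ u^((β-1)/2) p₂(2u, w)`. The remaining
product `g_c(σ, z - x) p₂(2u, 𝔶 - z)` is dominated by `p₂(c'(σ + u), 𝔶 - x) p₂(4u, 𝔶 - z)`, because
`|a + b|² / (s + t) ≤ |a|² / s + |b|² / t`, and integrating out `z` gives the bound.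
-/

open MeasureTheory Real Module
open scoped RealInnerProductSpace

theorem add_sq_div_add_le {α β s t : ℝ} (hs : 0 < s) (ht : 0 < t) :
    (α + β) ^ 2 / (s + t) ≤ α ^ 2 / s + β ^ 2 / t := by
  rw [div_add_div _ _ hs.ne' ht.ne', div_le_div_iff₀ (by positivity) (by positivity)]
  nlinarith [sq_nonneg (α * t - β * s), mul_pos hs ht]

theorem rpow_mul_exp_neg_div_four_le {τ p : ℝ} (hτ : 0 ≤ τ) (hp0 : 0 ≤ p) (hp1 : p ≤ 1) :
    τ ^ p * exp (-τ / 4) ≤ 4 := by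
  have hpow : τ ^ p ≤ 1 + τ :=
    calc τ ^ p ≤ (1 + τ) ^ p := rpow_le_rpow hτ (by linarith) hp0
      _ ≤ (1 + τ) ^ (1 : ℝ) := rpow_le_rpow_of_exponent_le (by linarith) hp1
      _ = 1 + τ := rpow_one _
  have hexp : 1 + τ ≤ 4 * exp (τ / 4) := by linarith [add_one_le_exp (τ / 4)]
  calc τ ^ p * exp (-τ / 4) ≤ 4 * exp (τ / 4) * exp (-τ / 4) := by gcongr; linarith
    _ = 4 := by rw [mul_assoc, ← exp_add]; ring_nf; simp

variable {E : Type*} [NormedAddCommGroup E] [InnerProductSpace ℝ E]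

/-- The paper's `p₂(v, w)`; its `g_c(v, w)` is `heatKernel (c * v) w`. -/
noncomputable def heatKernel (v : ℝ) (w : E) : ℝ :=
  (2 * π * v) ^ (-(finrank ℝ E : ℝ) / 2) * exp (-‖w‖ ^ 2 / (2 * v))

theorem abs_mul_inner_sub_mul_inner_le {G ρ : E → ℝ} {b : E → E} {β σ K M L : ℝ} (hσ : 0 ≤ σ)
    (hb : ∀ z, ‖b z‖ ≤ M) (hbH : ∀ z y, ‖b z - b y‖ ≤ L * ‖z - y‖ ^ β)
    (hG0 : ∀ z, 0 ≤ G z) (hGle : ∀ z, G z ≤ K * ρ z)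
    (hGH : ∀ z y, |G z - G y| ≤ K * (‖z - y‖ / σ ^ ((1 : ℝ) / 2)) ^ β * (ρ z + ρ y))
    (y z v : E) :
    |G z * ⟪b z, v⟫ - G y * ⟪b y, v⟫| ≤
      K * (M * σ ^ (-β / 2) * (ρ z + ρ y) + L * ρ y) * (‖y - z‖ ^ β * ‖v‖) := by
  have hscale : (‖z - y‖ / σ ^ ((1 : ℝ) / 2)) ^ β = σ ^ (-β / 2) * ‖y - z‖ ^ β := by
    rw [norm_sub_rev, div_rpow (norm_nonneg _) (rpow_nonneg hσ _), ← rpow_mul hσ,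
      div_eq_mul_inv, ← rpow_neg hσ, mul_comm]
    ring_nf
  have hGz : |G z - G y| ≤ K * σ ^ (-β / 2) * ‖y - z‖ ^ β * (ρ z + ρ y) := by
    have := hGH z y; rw [hscale] at this; linarith
  have hbz : |⟪b z, v⟫| ≤ M * ‖v‖ :=
    (abs_real_inner_le_norm _ _).trans (mul_le_mul_of_nonneg_right (hb z) (norm_nonneg v))
  have hby : |⟪b z - b y, v⟫| ≤ L * ‖y - z‖ ^ β * ‖v‖ :=
    (abs_real_inner_le_norm _ _).trans (mul_le_mul_of_nonneg_right
      (by rw [norm_sub_rev y]; exact hbH z y) (norm_nonneg v))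
  calc |G z * ⟪b z, v⟫ - G y * ⟪b y, v⟫|
      = |(G z - G y) * ⟪b z, v⟫ + G y * ⟪b z - b y, v⟫| := by rw [inner_sub_left]; ring_nf
    _ ≤ |G z - G y| * |⟪b z, v⟫| + G y * |⟪b z - b y, v⟫| :=
      (abs_add_le _ _).trans_eq (by rw [abs_mul, abs_mul, abs_of_nonneg (hG0 y)])
    _ ≤ (K * σ ^ (-β / 2) * ‖y - z‖ ^ β * (ρ z + ρ y)) * (M * ‖v‖) +
          K * ρ y * (L * ‖y - z‖ ^ β * ‖v‖) :=
      add_le_add (mul_le_mul hGz hbz (abs_nonneg _) ((abs_nonneg _).trans hGz))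
        (mul_le_mul (hGle y) hby (abs_nonneg _) ((hG0 y).trans (hGle y)))
    _ = _ := by ring

section HeatKernel

variable {s s' t v : ℝ}

theorem heatKernel_pos (hv : 0 < v) (w : E) : 0 < heatKernel v w := by
  unfold heatKernel; positivity

theorem heatKernel_eq_mul_heatKernel_mul_exp (hs : 0 < s) (hs' : 0 < s') (w w' : E) :
    heatKernel s w = (s' / s) ^ ((finrank ℝ E : ℝ) / 2) * heatKernel s' w' *
      exp (‖w'‖ ^ 2 / (2 * s') - ‖w‖ ^ 2 / (2 * s)) := by
  set r : ℝ := (finrank ℝ E : ℝ) / 2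
  have hratio : 0 < s' / s := div_pos hs' hs
  have hprefactor : (2 * π * s) ^ (-r) = (s' / s) ^ r * (2 * π * s') ^ (-r) := by
    rw [show 2 * π * s' = s' / s * (2 * π * s) by field_simp, mul_rpow hratio.le (by positivity),
      rpow_neg (by positivity), rpow_neg (by positivity),
      mul_inv_cancel_left₀ (rpow_pos_of_pos hratio r).ne']
  have hexp : exp (-‖w‖ ^ 2 / (2 * s)) =
      exp (-‖w'‖ ^ 2 / (2 * s')) * exp (‖w'‖ ^ 2 / (2 * s') - ‖w‖ ^ 2 / (2 * s)) := by
    rw [← exp_add]; ring_nf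
  simp only [heatKernel, neg_div _ (finrank ℝ E : ℝ)]
  rw [hprefactor, hexp]
  ring

theorem heatKernel_le_mul_heatKernel (hs : 0 < s) (hss' : s ≤ s') (w : E) :
    heatKernel s w ≤ (s' / s) ^ ((finrank ℝ E : ℝ) / 2) * heatKernel s' w := by
  have hs' := hs.trans_le hss'
  rw [heatKernel_eq_mul_heatKernel_mul_exp hs hs' w w]
  refine mul_le_of_le_one_right (mul_nonneg (by positivity) (heatKernel_pos hs' w).le)
    (exp_le_one_iff.2 ?_)
  rw [sub_nonpos]
  gcongr

/-- Half of the decay of `heatKernel t b` pays for the triangle inequality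
`‖a + b‖² / s' ≤ ‖a‖² / s + ‖b‖² / (2t)`; the other half survives as `heatKernel (2 * t) b`. -/
theorem heatKernel_mul_heatKernel_le_heatKernel_add (hs : 0 < s) (ht : 0 < t)
    (hs' : s + 2 * t ≤ s') (a b : E) :
    heatKernel s a * heatKernel t b ≤ (2 * s' / s) ^ ((finrank ℝ E : ℝ) / 2) *
      (heatKernel s' (a + b) * heatKernel (2 * t) b) := by
  have hst : 0 < s + 2 * t := by positivity
  have hs'pos : 0 < s' := hst.trans_le hs'
  have hexponent : ‖a + b‖ ^ 2 / (2 * s') - ‖a‖ ^ 2 / (2 * s)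
      + (‖b‖ ^ 2 / (2 * (2 * t)) - ‖b‖ ^ 2 / (2 * t)) ≤ 0 := by
    have htriangle : ‖a + b‖ ^ 2 / s' ≤ ‖a‖ ^ 2 / s + ‖b‖ ^ 2 / (2 * t) :=
      calc ‖a + b‖ ^ 2 / s' ≤ (‖a‖ + ‖b‖) ^ 2 / (s + 2 * t) :=
          div_le_div₀ (by positivity) (pow_le_pow_left₀ (norm_nonneg _) (norm_add_le a b) 2) hst hs'
        _ ≤ _ := add_sq_div_add_le hs (by positivity)
    have halve : ∀ x y : ℝ, x / (2 * y) = x / y / 2 := fun x y => by rw [div_div, mul_comm]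
    simp only [halve] at htriangle ⊢
    linarith
  rw [heatKernel_eq_mul_heatKernel_mul_exp hs hs'pos a (a + b),
    heatKernel_eq_mul_heatKernel_mul_exp ht (by positivity : (0:ℝ) < 2 * t) b b]
  calc _ = (s' / s * (2 * t / t)) ^ ((finrank ℝ E : ℝ) / 2) *
        (heatKernel s' (a + b) * heatKernel (2 * t) b) *
        exp (‖a + b‖ ^ 2 / (2 * s') - ‖a‖ ^ 2 / (2 * s)
          + (‖b‖ ^ 2 / (2 * (2 * t)) - ‖b‖ ^ 2 / (2 * t))) := by
        rw [mul_rpow (by positivity) (by positivity), exp_add]; ring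
    _ ≤ _ := by
        rw [show s' / s * (2 * t / t) = 2 * s' / s by field_simp]
        exact mul_le_of_le_one_right (mul_nonneg (by positivity)
          (mul_pos (heatKernel_pos hs'pos _) (heatKernel_pos (by positivity) _)).le)
          (exp_le_one_iff.2 hexponent)

theorem heatKernel_mul_heatKernel_le (hs : 0 < s) (ht : 0 < t) (hs' : s ≤ s') (a b : E) :
    heatKernel s a * heatKernel t b ≤ (2 * s' / s) ^ ((finrank ℝ E : ℝ) / 2) *
      (heatKernel s' a * heatKernel (2 * t) b) := by
  have hratio : 0 ≤ s' / s := (div_pos (hs.trans_le hs') hs).le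
  calc heatKernel s a * heatKernel t b
      ≤ ((s' / s) ^ ((finrank ℝ E : ℝ) / 2) * heatKernel s' a) *
          ((2 * t / t) ^ ((finrank ℝ E : ℝ) / 2) * heatKernel (2 * t) b) :=
        mul_le_mul (heatKernel_le_mul_heatKernel hs hs' a)
          (heatKernel_le_mul_heatKernel ht (by linarith) b) (heatKernel_pos ht b).le
          (mul_nonneg (rpow_nonneg hratio _) (heatKernel_pos (hs.trans_le hs') a).le)
    _ = (s' / s * (2 * t / t)) ^ ((finrank ℝ E : ℝ) / 2) *
          (heatKernel s' a * heatKernel (2 * t) b) := by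
        rw [mul_rpow hratio (by positivity)]; ring
    _ = _ := by rw [show s' / s * (2 * t / t) = 2 * s' / s by field_simp]

theorem rpow_norm_mul_heatKernel_le {q : ℝ} (hq0 : 0 ≤ q) (hq2 : q ≤ 2) (hv : 0 < v) (w : E) :
    ‖w‖ ^ q * heatKernel v w ≤
      4 * 2 ^ ((finrank ℝ E : ℝ) / 2) * v ^ (q / 2) * heatKernel (2 * v) w := by
  set τ := ‖w‖ ^ 2 / v with hτ
  have hnorm : ‖w‖ ^ q = v ^ (q / 2) * τ ^ (q / 2) := by
    rw [← mul_rpow hv.le (by positivity), hτ, mul_div_cancel₀ _ hv.ne', ← rpow_natCast,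
      ← rpow_mul (norm_nonneg w)]
    ring_nf
  have hexp : ‖w‖ ^ 2 / (2 * (2 * v)) - ‖w‖ ^ 2 / (2 * v) = -τ / 4 := by
    rw [hτ]; field_simp; ring
  rw [heatKernel_eq_mul_heatKernel_mul_exp hv (by positivity : (0:ℝ) < 2 * v) w w, hexp, hnorm,
    mul_div_cancel_right₀ _ hv.ne']
  calc v ^ (q / 2) * τ ^ (q / 2) * (2 ^ ((finrank ℝ E : ℝ) / 2) * heatKernel (2 * v) w *
        exp (-τ / 4))
      = (τ ^ (q / 2) * exp (-τ / 4)) *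
          (2 ^ ((finrank ℝ E : ℝ) / 2) * v ^ (q / 2) * heatKernel (2 * v) w) := by ring
    _ ≤ 4 * (2 ^ ((finrank ℝ E : ℝ) / 2) * v ^ (q / 2) * heatKernel (2 * v) w) := by
      gcongr
      · exact (mul_pos (by positivity) (heatKernel_pos (by positivity) w)).le
      · exact rpow_mul_exp_neg_div_four_le (by positivity) (by linarith) (by linarith)
    _ = _ := by ring

theorem hasGradientAt_heatKernel [CompleteSpace E] (hv : 0 < v) (w : E) :
    HasGradientAt (heatKernel v) (-(heatKernel v w / v) • w) w := by
  have hexponent : HasFDerivAt (fun z : E => -‖z‖ ^ 2 / (2 * v))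
      ((-(2 * v)⁻¹) • (2 : ℕ) • (innerSL ℝ w).comp (ContinuousLinearMap.id ℝ E)) w :=
    ((hasFDerivAt_id w).norm_sq.const_mul (-(2 * v)⁻¹)).congr_of_eventuallyEq
      (.of_forall fun z => by simp only [id]; ring)
  rw [hasGradientAt_iff_hasFDerivAt]
  refine (hexponent.exp.const_mul ((2 * π * v) ^ (-(finrank ℝ E : ℝ) / 2))).congr_fderiv ?_
  ext y
  simp only [heatKernel, InnerProductSpace.toDual_apply_apply, smul_apply,
    ContinuousLinearMap.comp_id, coe_innerSL_apply, inner_smul_left, smul_eq_mul,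
    nsmul_eq_mul, Nat.cast_ofNat, RCLike.conj_to_real]
  field_simp

theorem gradient_heatKernel [CompleteSpace E] (hv : 0 < v) (w : E) :
    gradient (heatKernel v) w = -(heatKernel v w / v) • w :=
  (hasGradientAt_heatKernel hv w).gradient

theorem norm_gradient_heatKernel [CompleteSpace E] (hv : 0 < v) (w : E) :
    ‖gradient (heatKernel v) w‖ = ‖w‖ * heatKernel v w / v := by
  rw [gradient_heatKernel hv, norm_smul, norm_neg, Real.norm_of_nonneg
    (div_pos (heatKernel_pos hv w) hv).le]
  ring

theorem continuous_heatKernel : Continuous (heatKernel (E := E) v) := by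
  unfold heatKernel; fun_prop

theorem rpow_norm_mul_norm_gradient_heatKernel_le [CompleteSpace E] {β : ℝ} (hβ : -1 < β)
    (hβ' : β ≤ 1) (hv : 0 < v) (w : E) :
    ‖w‖ ^ β * ‖gradient (heatKernel v) w‖ ≤
      4 * 2 ^ ((finrank ℝ E : ℝ) / 2) * v ^ ((β - 1) / 2) * heatKernel (2 * v) w := by
  have hmoment := rpow_norm_mul_heatKernel_le (q := β + 1) (by linarith) (by linarith) hv w
  rw [show (β + 1) / 2 = (β - 1) / 2 + 1 by ring, rpow_add hv, rpow_one] at hmoment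
  rw [norm_gradient_heatKernel hv, ← mul_div_assoc, ← mul_assoc, ← rpow_add_one' (norm_nonneg w)
    (by linarith), div_le_iff₀ hv]
  linarith

end HeatKernel

section Integrals

variable [FiniteDimensional ℝ E] [MeasurableSpace E] [BorelSpace E] {v : ℝ}

theorem integral_heatKernel (hv : 0 < v) : ∫ w : E, heatKernel v w = 1 := by
  have hexp : ∀ w : E, exp (-‖w‖ ^ 2 / (2 * v)) = exp (-(2 * v)⁻¹ * ‖w‖ ^ 2) := fun w => by
    ring_nf
  simp only [heatKernel, hexp]
  rw [integral_const_mul, GaussianFourier.integral_rexp_neg_mul_sq_norm (by positivity),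
    div_inv_eq_mul, neg_div, rpow_neg (by positivity), show π * (2 * v) = 2 * π * v by ring,
    inv_mul_cancel₀]
  positivity

theorem integrable_heatKernel (hv : 0 < v) : Integrable (heatKernel (E := E) v) :=
  .of_integral_ne_zero (by rw [integral_heatKernel hv]; exact one_ne_zero)

theorem integrable_gradient_heatKernel (hv : 0 < v) :
    Integrable (gradient (heatKernel (E := E) v)) := by
  have hgradient : gradient (heatKernel (E := E) v) = fun w => -(heatKernel v w / v) • w :=
    funext (gradient_heatKernel hv)
  refine ((integrable_heatKernel (by positivity : (0:ℝ) < 2 * v)).const_mul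
    (4 * 2 ^ ((finrank ℝ E : ℝ) / 2) * v ^ (-1 / 2 : ℝ))).mono' ?_ (.of_forall fun w => ?_)
  · rw [hgradient]
    exact (((continuous_heatKernel (E := E) (v := v)).div_const v).neg.smul
      continuous_id).aestronglyMeasurable
  · simpa using rpow_norm_mul_norm_gradient_heatKernel_le (β := 0) (by norm_num) (by norm_num) hv w

theorem integral_gradient_heatKernel (hv : 0 < v) :
    ∫ w, gradient (heatKernel (E := E) v) w = 0 := by
  have hodd : ∀ w : E, gradient (heatKernel v) (-w) = -gradient (heatKernel v) w := fun w => by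
    simp [gradient_heatKernel hv, heatKernel]
  have := integral_neg_eq_self (gradient (heatKernel (E := E) v)) volume
  rw [funext hodd, integral_neg] at this
  have htwice : (2 : ℝ) • ∫ w, gradient (heatKernel (E := E) v) w = 0 := by
    rw [two_smul]; nth_rw 1 [← this]; exact neg_add_cancel _
  exact (smul_eq_zero.1 htwice).resolve_left two_ne_zero

end Integrals

theorem abs_mul_inner_gradient_heatKernel_sub_le [CompleteSpace E] {G : E → ℝ} {b : E → E}
    {β c σ u K M L : ℝ} {x : E} (hβ : -1 < β) (hβ' : β ≤ 1) (hc : 0 < c) (hK : 0 ≤ K)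
    (hL : 0 ≤ L) (hu : 0 < u) (huσ : u ≤ σ)
    (hb : ∀ z, ‖b z‖ ≤ M) (hbH : ∀ z y, ‖b z - b y‖ ≤ L * ‖z - y‖ ^ β)
    (hG0 : ∀ z, 0 ≤ G z) (hGle : ∀ z, G z ≤ K * heatKernel (c * σ) (z - x))
    (hGH : ∀ z y, |G z - G y| ≤ K * (‖z - y‖ / σ ^ ((1 : ℝ) / 2)) ^ β *
      (heatKernel (c * σ) (z - x) + heatKernel (c * σ) (y - x)))
    (y z : E) :
    |G z * ⟪b z, gradient (heatKernel u) (y - z)⟫ - G y * ⟪b y, gradient (heatKernel u) (y - z)⟫|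
      ≤ (4 * 2 ^ ((finrank ℝ E : ℝ) / 2) * (4 * (c + 4) / c) ^ ((finrank ℝ E : ℝ) / 2) * K *
          (2 * M + L) * u ^ ((β - 1) / 2) * (1 + σ ^ (-β / 2)) *
          heatKernel ((c + 4) * (σ + u)) (y - x)) * heatKernel (4 * u) (y - z) := by
  set r := (finrank ℝ E : ℝ) / 2
  set ρ := fun z => heatKernel (c * σ) (z - x)
  set Q := heatKernel ((c + 4) * (σ + u)) (y - x) * heatKernel (4 * u) (y - z)
  have hσ : 0 < σ := hu.trans_le huσ
  have hcσ : 0 < c * σ := mul_pos hc hσ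
  have hM : 0 ≤ M := (norm_nonneg _).trans (hb y)
  have hρ : ∀ z, 0 ≤ ρ z := fun z => (heatKernel_pos hcσ _).le
  have hQ : 0 ≤ Q :=
    (mul_pos (heatKernel_pos (by positivity) _) (heatKernel_pos (by positivity) _)).le
  have hκ : (2 * ((c + 4) * (σ + u)) / (c * σ)) ^ r ≤ (4 * (c + 4) / c) ^ r := by
    refine rpow_le_rpow (by positivity) ?_ (by positivity)
    rw [div_le_div_iff₀ hcσ hc]
    nlinarith [mul_pos hc hc]
  have hcross_z : ρ z * heatKernel (2 * u) (y - z) ≤ (4 * (c + 4) / c) ^ r * Q := by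
    have h := heatKernel_mul_heatKernel_le_heatKernel_add hcσ (by positivity : 0 < 2 * u)
      (s' := (c + 4) * (σ + u)) (by nlinarith) (z - x) (y - z)
    rw [sub_add_sub_cancel', show 2 * (2 * u) = 4 * u by ring] at h
    exact h.trans (mul_le_mul_of_nonneg_right hκ hQ)
  have hcross_y : ρ y * heatKernel (2 * u) (y - z) ≤ (4 * (c + 4) / c) ^ r * Q := by
    have h := heatKernel_mul_heatKernel_le hcσ (by positivity : 0 < 2 * u)
      (s' := (c + 4) * (σ + u)) (by nlinarith) (y - x) (y - z)
    rw [show 2 * (2 * u) = 4 * u by ring] at h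
    exact h.trans (mul_le_mul_of_nonneg_right hκ hQ)
  have hmoment := rpow_norm_mul_norm_gradient_heatKernel_le hβ hβ' hu (y - z)
  have hσβ : 0 ≤ σ ^ (-β / 2) := rpow_nonneg hσ.le _
  calc _ ≤ K * (M * σ ^ (-β / 2) * (ρ z + ρ y) + L * ρ y) *
        (‖y - z‖ ^ β * ‖gradient (heatKernel u) (y - z)‖) :=
        abs_mul_inner_sub_mul_inner_le hσ.le hb hbH hG0 hGle hGH y z _
    _ ≤ K * (M * σ ^ (-β / 2) * (ρ z + ρ y) + L * ρ y) *
        (4 * 2 ^ r * u ^ ((β - 1) / 2) * heatKernel (2 * u) (y - z)) :=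
        mul_le_mul_of_nonneg_left hmoment (by have := hρ z; have := hρ y; positivity)
    _ = K * (4 * 2 ^ r * u ^ ((β - 1) / 2)) * (M * σ ^ (-β / 2) *
          (ρ z * heatKernel (2 * u) (y - z) + ρ y * heatKernel (2 * u) (y - z)) +
          L * (ρ y * heatKernel (2 * u) (y - z))) := by ring
    _ ≤ K * (4 * 2 ^ r * u ^ ((β - 1) / 2)) * (M * σ ^ (-β / 2) *
          ((4 * (c + 4) / c) ^ r * Q + (4 * (c + 4) / c) ^ r * Q) +
          L * ((4 * (c + 4) / c) ^ r * Q)) := by gcongr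
    _ = (4 * (c + 4) / c) ^ r * K * (4 * 2 ^ r * u ^ ((β - 1) / 2)) *
          (2 * M * σ ^ (-β / 2) + L) * Q := by ring
    _ ≤ (4 * (c + 4) / c) ^ r * K * (4 * 2 ^ r * u ^ ((β - 1) / 2)) *
          ((2 * M + L) * (1 + σ ^ (-β / 2))) * Q := by
        gcongr; nlinarith [mul_nonneg hL hσβ]
    _ = _ := by ring

theorem abs_integral_mul_inner_gradient_heatKernel_le [FiniteDimensional ℝ E] [MeasurableSpace E]
    [BorelSpace E] {G : E → ℝ} {b : E → E} {β c σ u K M L : ℝ} {x : E} (hβ : -1 < β)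
    (hβ' : β ≤ 1) (hc : 0 < c) (hK : 0 ≤ K) (hL : 0 ≤ L) (hu : 0 < u) (huσ : u ≤ σ)
    (hb : ∀ z, ‖b z‖ ≤ M) (hbH : ∀ z y, ‖b z - b y‖ ≤ L * ‖z - y‖ ^ β)
    (hG0 : ∀ z, 0 ≤ G z) (hGle : ∀ z, G z ≤ K * heatKernel (c * σ) (z - x))
    (hGH : ∀ z y, |G z - G y| ≤ K * (‖z - y‖ / σ ^ ((1 : ℝ) / 2)) ^ β *
      (heatKernel (c * σ) (z - x) + heatKernel (c * σ) (y - x)))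
    (y : E) :
    |∫ z, G z * ⟪b z, gradient (heatKernel u) (y - z)⟫| ≤
      4 * 2 ^ ((finrank ℝ E : ℝ) / 2) * (4 * (c + 4) / c) ^ ((finrank ℝ E : ℝ) / 2) * K *
        (2 * M + L) * u ^ ((β - 1) / 2) * (1 + σ ^ (-β / 2)) *
        heatKernel ((c + 4) * (σ + u)) (y - x) := by
  set F := fun z => G z * ⟪b z, gradient (heatKernel u) (y - z)⟫
  set H := fun z => G y * ⟪b y, gradient (heatKernel u) (y - z)⟫
  have hgradient := (integrable_gradient_heatKernel hu).comp_sub_left y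
  have hH : Integrable H := (hgradient.const_inner (b y)).const_mul (G y)
  have hH0 : ∫ z, H z = 0 := by
    simp only [H]
    rw [integral_const_mul, integral_inner hgradient,
      integral_sub_left_eq_self (gradient (heatKernel u)), integral_gradient_heatKernel hu,
      inner_zero_right, mul_zero]
  by_cases hF : Integrable F
  swap
  · rw [integral_undef hF, abs_zero]
    have hσ : 0 < σ := hu.trans_le huσ
    have := heatKernel_pos (E := E) (by positivity : 0 < (c + 4) * (σ + u)) (y - x)
    have : 0 ≤ M := (norm_nonneg _).trans (hb y)
    positivity
  calc |∫ z, F z| = ‖∫ z, (F z - H z)‖ := by rw [integral_sub hF hH, hH0, sub_zero, norm_eq_abs]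
    _ ≤ ∫ z, _ * heatKernel (4 * u) (y - z) :=
        norm_integral_le_of_norm_le
          (((integrable_heatKernel (by positivity)).comp_sub_left y).const_mul _)
          (.of_forall fun z => abs_mul_inner_gradient_heatKernel_sub_le hβ hβ' hc hK hL hu huσ
            hb hbH hG0 hGle hGH y z)
    _ = _ := by
        rw [integral_const_mul, integral_sub_left_eq_self (heatKernel (4 * u)),
          integral_heatKernel (by positivity), mul_one]

theorem stmt18_general (d : ℕ) (β : ℝ) (hβ0 : 0 < β) (hβ1 : β < 1)
    (c : ℝ) (hc : 1 ≤ c) (K M L : ℝ) (hK : 1 ≤ K) (hM : 0 < M) (hL : 0 < L)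
    (p₂ : ℝ → EuclideanSpace ℝ (Fin d) → ℝ)
    (hp₂ : ∀ u : ℝ, 0 < u → ∀ z, p₂ u z =
      (2 * π * u) ^ (-(d : ℝ) / 2) * Real.exp (-‖z‖ ^ 2 / (2 * u)))
    (g : ℝ → ℝ → EuclideanSpace ℝ (Fin d) → ℝ)
    (hg : ∀ c' v : ℝ, 0 < c' → 0 < v → ∀ z, g c' v z =
      (2 * π * c' * v) ^ (-(d : ℝ) / 2) * Real.exp (-‖z‖ ^ 2 / (2 * c' * v))) :
    ∃ C : ℝ, 0 < C ∧ ∃ c' : ℝ, c < c' ∧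
      ∀ (b : EuclideanSpace ℝ (Fin d) → EuclideanSpace ℝ (Fin d)),
        (∀ z, ‖b z‖ ≤ M) →
        (∀ z y, ‖b z - b y‖ ≤ L * ‖z - y‖ ^ β) →
        ∀ (G : EuclideanSpace ℝ (Fin d) → ℝ) (x : EuclideanSpace ℝ (Fin d)) (σ : ℝ),
          0 < σ →
          (∀ z, 0 ≤ G z) →
          (∫ z, G z) = 1 →
          (∀ z, G z ≤ K * g c σ (z - x)) →
          (∀ z y, |G z - G y| ≤
            K * (‖z - y‖ / σ ^ ((1 : ℝ) / 2)) ^ β *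
              (g c σ (z - x) + g c σ (y - x))) →
          ∀ u : ℝ, 0 < u → u ≤ σ → ∀ 𝔶 : EuclideanSpace ℝ (Fin d),
            |∫ z, G z * (inner ℝ (b z) (gradient (p₂ u) (𝔶 - z)) : ℝ)| ≤
              C * u ^ ((β - 1) / 2) * (1 + σ ^ (-β / 2)) *
                g c' (σ + u) (𝔶 - x) := by
  have hp : ∀ u, 0 < u → p₂ u = heatKernel u := fun u hu => funext fun w => by
    rw [hp₂ u hu, heatKernel, finrank_euclideanSpace_fin]
  have hgk : ∀ c' v, 0 < c' → 0 < v → ∀ w, g c' v w = heatKernel (c' * v) w :=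
    fun c' v hc' hv w => by
      rw [hg c' v hc' hv, heatKernel, finrank_euclideanSpace_fin]; simp only [mul_assoc]
  refine ⟨4 * 2 ^ ((d : ℝ) / 2) * (4 * (c + 4) / c) ^ ((d : ℝ) / 2) * K * (2 * M + L),
    by positivity, c + 4, by linarith, ?_⟩
  intro b hb hbH G x σ hσ hG0 _ hGle hGH u hu huσ y
  simp only [hgk c σ (by linarith) hσ] at hGle hGH
  have h := abs_integral_mul_inner_gradient_heatKernel_le (by linarith) hβ1.le (by linarith)
    (by linarith) hL.le hu huσ hb hbH hG0 hGle hGH y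
  rw [finrank_euclideanSpace_fin] at h
  rwa [hp u hu, hgk (c + 4) (σ + u) (by linarith) (by linarith)]

/-- Smoothing effect of a Hölder drift against the heat kernel gradient
(Gaussian case). -/
theorem stmt18 (d : ℕ) (hd : 1 ≤ d) (β : ℝ) (hβ0 : 0 < β) (hβ1 : β < 1)
    (c : ℝ) (hc : 1 ≤ c) (K M L : ℝ) (hK : 1 ≤ K) (hM : 0 < M) (hL : 0 < L)
    (p₂ : ℝ → EuclideanSpace ℝ (Fin d) → ℝ)
    (hp₂ : ∀ u : ℝ, 0 < u → ∀ z, p₂ u z =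
      (2 * π * u) ^ (-(d : ℝ) / 2) * Real.exp (-‖z‖ ^ 2 / (2 * u)))
    (g : ℝ → ℝ → EuclideanSpace ℝ (Fin d) → ℝ)
    (hg : ∀ c' v : ℝ, 0 < c' → 0 < v → ∀ z, g c' v z =
      (2 * π * c' * v) ^ (-(d : ℝ) / 2) * Real.exp (-‖z‖ ^ 2 / (2 * c' * v))) :
    ∃ C : ℝ, 0 < C ∧ ∃ c' : ℝ, c < c' ∧
      ∀ (b : EuclideanSpace ℝ (Fin d) → EuclideanSpace ℝ (Fin d)),
        (∀ z, ‖b z‖ ≤ M) →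
        (∀ z y, ‖b z - b y‖ ≤ L * ‖z - y‖ ^ β) →
        ∀ (G : EuclideanSpace ℝ (Fin d) → ℝ) (x : EuclideanSpace ℝ (Fin d)) (σ : ℝ),
          0 < σ →
          (∀ z, 0 ≤ G z) →
          (∫ z, G z) = 1 →
          (∀ z, G z ≤ K * g c σ (z - x)) →
          (∀ z y, |G z - G y| ≤
            K * (‖z - y‖ / σ ^ ((1 : ℝ) / 2)) ^ β *
              (g c σ (z - x) + g c σ (y - x))) →
          ∀ u : ℝ, 0 < u → u ≤ σ → ∀ 𝔶 : EuclideanSpace ℝ (Fin d),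
            |∫ z, G z * (inner ℝ (b z) (gradient (p₂ u) (𝔶 - z)) : ℝ)| ≤
              C * u ^ ((β - 1) / 2) * (1 + σ ^ (-β / 2)) *
                g c' (σ + u) (𝔶 - x) :=
  stmt18_general d β hβ0 hβ1 c hc K M L hK hM hL p₂ hp₂ g hg
end
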